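/- Let p be an odd prime. Then sum_{n=0}^{(p-1)/2} F(n,0) = sum_{k=1}^{(p-1)/2} G((p+1)/2, k), where F and G are the rational-valued functions defined by F(n,k) = (-1)^n (3n-2k+1) C(2n,n) C(2n-2k,n-k) C(2n-2k,n) / 2^{3n-2k} and G(n,k) = (-1)^{n+1} n C(2n,n) C(2n-2k,n-k) C(2n-2k,n-1) / 2^{3n-2k}, with the convention that F(n,k) = G(n,k) = 0 whenever n < k. -/

import Mathlib

/-- `F(n,k) = (-1)^n (3n-2k+1) C(2n,n) C(2n-2k,n-k) C(2n-2k,n) / 2^{3n-2k}`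
for `n ≥ k`, and `F(n,k) = 0` for `n < k`. -/
def F (n k : ℕ) : ℚ :=
  if n < k then 0 else
    (-1) ^ n * (3 * (n : ℚ) - 2 * (k : ℚ) + 1) * ((2 * n).choose n) *
      ((2 * n - 2 * k).choose (n - k)) * ((2 * n - 2 * k).choose n) / 2 ^ (3 * n - 2 * k)

/-- `G(n,k) = (-1)^{n+1} n C(2n,n) C(2n-2k,n-k) C(2n-2k,n-1) / 2^{3n-2k}`
for `n ≥ k`, and `G(n,k) = 0` for `n < k`. -/
def G (n k : ℕ) : ℚ :=
  if n < k then 0 else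
    (-1) ^ (n + 1) * (n : ℚ) * ((2 * n).choose n) *
      ((2 * n - 2 * k).choose (n - k)) * ((2 * n - 2 * k).choose (n - 1)) / 2 ^ (3 * n - 2 * k)

/-!
`(F, G)` is a Wilf–Zeilberger pair: `F(n,k) - F(n,k+1) = G(n+1,k+1) - G(n,k+1)`.
Writing `p = 2t + 1`, sum this over `n ≤ t` and `k < t`. Summing over `k` first telescopes to
`∑ₙ (F(n,0) - F(n,t))`, and `F(n,t) = 0` for `n ≤ t` since `t ≥ 1`; summing over `n` first
telescopes to `∑ₖ (G(t+1,k+1) - G(0,k+1))`, and `G(0,k+1) = 0`.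
-/

open Finset Nat

theorem Nat.cast_choose_succ_mul {R : Type*} [CommRing R] (n r : ℕ) :
    (n.choose (r + 1) : R) * (r + 1) = n.choose r * (n - r) := by
  rcases le_or_gt r n with hr | hr
  · have h := congrArg (Nat.cast : ℕ → R) (choose_succ_right_eq n r)
    push_cast [Nat.cast_sub hr] at h
    exact h
  · simp [choose_eq_zero_of_lt hr, choose_eq_zero_of_lt (Nat.lt_succ_of_lt hr)]

theorem Nat.cast_choose_add_two_succ {K : Type*} [Field K] [CharZero K] (N r : ℕ) :
    ((N : K) - r + 1) * (N + 1) * (N + 2).choose (r + 1) =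
      (N + 2) * ((r + N + 2) * N.choose (r + 1) + (r + 1) * N.choose r) := by
  have e1 : ((N + 2 : ℕ) : K) * (N + 1).choose r = (N + 2).choose (r + 1) * (r + 1) := by
    exact_mod_cast add_one_mul_choose_eq (N + 1) r
  have e2 := cast_choose_succ_mul (R := K) N r
  have e3 := cast_choose_succ_mul (R := K) (N + 1) r
  have pascal : ((N + 1).choose (r + 1) : K) = N.choose r + N.choose (r + 1) := by
    exact_mod_cast choose_succ_succ' N r
  apply mul_left_cancel₀ (Nat.cast_add_one_ne_zero r : (r : K) + 1 ≠ 0)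
  push_cast at e1 e3
  linear_combination (-(N - r + 1) * (N + 1) : K) * e1 - ((N + 1) * (N + 2) : K) * e3
    + ((N + 1) * (N + 2) * (r + 1) : K) * pascal - ((N + 2) * (r + 1) : K) * e2

theorem F_of_lt {n k : ℕ} (h : n < k) : F n k = 0 := if_pos h

theorem G_of_lt {n k : ℕ} (h : n < k) : G n k = 0 := if_pos h

theorem F_self {n : ℕ} (hn : n ≠ 0) : F n n = 0 := by
  simp [F, choose_eq_zero_of_lt (pos_of_ne_zero hn)]

theorem G_self {n : ℕ} (hn : 2 ≤ n) : G n n = 0 := by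
  simp [G, choose_eq_zero_of_lt (by omega : 0 < n - 1)]

theorem F_eq_of_add_eq {n k m : ℕ} (h : k + m = n) :
    F n k = (-1) ^ n * ((k : ℚ) + 3 * m + 1) * centralBinom n * centralBinom m *
      (2 * m).choose n / 2 ^ (k + 3 * m) := by
  subst h
  rw [F, if_neg (by omega), show 2 * (k + m) - 2 * k = 2 * m by omega,
    show k + m - k = m by omega, show 3 * (k + m) - 2 * k = k + 3 * m by omega]
  simp only [centralBinom_eq_two_mul_choose]
  push_cast
  ring

theorem G_succ_eq_of_add_eq {n k m : ℕ} (h : k + m = n + 1) :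
    G (n + 1) k = (-1) ^ n * ((n : ℚ) + 1) * centralBinom (n + 1) * centralBinom m *
      (2 * m).choose n / 2 ^ (k + 3 * m) := by
  rw [G, if_neg (by omega), show 2 * (n + 1) - 2 * k = 2 * m by omega,
    show n + 1 - k = m by omega, show 3 * (n + 1) - 2 * k = k + 3 * m by omega, Nat.add_sub_cancel]
  simp only [centralBinom_eq_two_mul_choose]
  push_cast
  ring

/- After the substitution `n = k + m + 1` and clearing the central binomial coefficients with
`(m + 1) C(2m + 2, m + 1) = 2 (2m + 1) C(2m, m)`, the identity becomes `cast_choose_add_two_succ`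
for `N = 2m`, `r = k + m`. -/
theorem F_sub_F_succ_of_lt {n k : ℕ} (h : k < n) :
    F n k - F n (k + 1) = G (n + 1) (k + 1) - G n (k + 1) := by
  obtain ⟨m, rfl⟩ : ∃ m, n = k + m + 1 := ⟨n - k - 1, by omega⟩
  rw [F_eq_of_add_eq (m := m + 1) (by ring), F_eq_of_add_eq (m := m) (by ring),
    G_succ_eq_of_add_eq (m := m + 1) (by ring),
    G_succ_eq_of_add_eq (n := k + m) (m := m) (by ring), show 2 * (m + 1) = 2 * m + 2 by ring]
  have h1 : ((m : ℚ) + 1) * centralBinom (m + 1) = 2 * (2 * m + 1) * centralBinom m := by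
    exact_mod_cast succ_mul_centralBinom_succ m
  have h2 : ((k + m + 1 : ℕ) + 1 : ℚ) * centralBinom (k + m + 1 + 1) =
      2 * (2 * (k + m + 1 : ℕ) + 1) * centralBinom (k + m + 1) := by
    exact_mod_cast succ_mul_centralBinom_succ (k + m + 1)
  have hbin := cast_choose_add_two_succ (K := ℚ) (2 * m) (k + m)
  apply mul_left_cancel₀ (by positivity : (m : ℚ) + 1 ≠ 0)
  push_cast at h2 hbin ⊢
  linear_combination
    (-(m + 1) * (-1) ^ (k + m + 1) * centralBinom (m + 1) * (2 * m + 2).choose (k + m + 1) /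
      2 ^ (k + 3 * m + 4) : ℚ) * h2
    + ((-1) ^ (k + m + 1) * centralBinom (k + m + 1) * (2 * m + 2).choose (k + m + 1) *
      (m - k + 1) / 2 ^ (k + 3 * m + 3) : ℚ) * h1
    + ((-1) ^ (k + m + 1) * centralBinom (k + m + 1) * centralBinom m /
      2 ^ (k + 3 * m + 2) : ℚ) * hbin

theorem F_sub_F_succ (n k : ℕ) : F n k - F n (k + 1) = G (n + 1) (k + 1) - G n (k + 1) := by
  rcases lt_trichotomy n k with h | rfl | h
  · rw [F_of_lt h, F_of_lt (by omega), G_of_lt (by omega), G_of_lt (by omega)]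
  · rcases eq_or_ne n 0 with rfl | hn
    · norm_num [F, G]
    · rw [F_self hn, F_of_lt (by omega), G_self (by omega), G_of_lt (by omega)]
  · exact F_sub_F_succ_of_lt h

theorem Finset.sum_range_sub_eq_of_wz {M : Type*} [AddCommGroup M] {f g : ℕ → ℕ → M}
    (hfg : ∀ n k, f n k - f n (k + 1) = g (n + 1) (k + 1) - g n (k + 1)) (N K : ℕ) :
    ∑ n ∈ range N, (f n 0 - f n K) = ∑ k ∈ range K, (g N (k + 1) - g 0 (k + 1)) := by
  simp only [← sum_range_sub' (f _), hfg]
  rw [sum_comm]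
  exact sum_congr rfl fun k _ ↦ sum_range_sub (g · (k + 1)) N

/-- For any odd prime `p`, `∑_{n=0}^{(p-1)/2} F(n,0) = ∑_{k=1}^{(p-1)/2} G((p+1)/2, k)`. -/
theorem sum_F_eq_sum_G (p : ℕ) (hp : p.Prime) (hodd : Odd p) :
    ∑ n ∈ Finset.range ((p - 1) / 2 + 1), F n 0 =
      ∑ k ∈ Finset.Icc 1 ((p - 1) / 2), G ((p + 1) / 2) k := by
  obtain ⟨t, rfl⟩ := hodd
  have ht : t ≠ 0 := by rintro rfl; exact Nat.not_prime_one hp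
  rw [show (2 * t + 1 - 1) / 2 = t by omega, show (2 * t + 1 + 1) / 2 = t + 1 by omega]
  have hF : ∀ n ∈ range (t + 1), F n t = 0 := fun n hn ↦ by
    rcases (Nat.lt_succ_iff.mp (mem_range.mp hn)).lt_or_eq with h | rfl
    exacts [F_of_lt h, F_self ht]
  calc ∑ n ∈ range (t + 1), F n 0 = ∑ n ∈ range (t + 1), (F n 0 - F n t) :=
        sum_congr rfl fun n hn ↦ by rw [hF n hn, sub_zero]
    _ = ∑ k ∈ range t, (G (t + 1) (k + 1) - G 0 (k + 1)) :=
        sum_range_sub_eq_of_wz F_sub_F_succ _ _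
    _ = ∑ k ∈ Icc 1 t, G (t + 1) k := by
        simp only [G_of_lt (Nat.succ_pos _), sub_zero]
        rw [← Ico_add_one_right_eq_Icc, sum_Ico_eq_sum_range, Nat.add_sub_cancel]
        simp only [add_comm 1]
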